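/- arXiv:1307.3533 — 6 statements merged into one kernel-verified Lean document; each statement's English description precedes it below -/
import Mathlib

section
/- Let E be an irredundant subset of a boolean algebra B and let d be an element of B not in the subalgebra generated by E such that the only element of the subalgebra generated by E below d is 0. Then E ∪ {d} is irredundant. -/
open Cardinal Set

universe u
variable {B : Type u} [BooleanAlgebra B]

/-- Membership in the boolean subalgebra of `B` generated by `E`. -/
inductive InGen (E : Set B) : B → Prop
  | base {a : B} : a ∈ E → InGen E a
  | bot : InGen E ⊥
  | compl {a : B} : InGen E a → InGen E aᶜ
  | sup {a b : B} : InGen E a → InGen E b → InGen E (a ⊔ b)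

/-- `E` is irredundant. -/
def Irred (E : Set B) : Prop := ∀ a ∈ E, ¬ InGen (E \ {a}) a

/-- `E` is independent. -/
def Indep (E : Set B) : Prop :=
  ∀ F G : Finset B, ↑F ⊆ E → ↑G ⊆ E → Disjoint F G →
    F.inf id ⊓ G.inf (fun a => aᶜ) ≠ ⊥

/-- `S` is dense in `B`. -/
def DenseSub (S : Set B) : Prop := ∀ b : B, b ≠ ⊥ → ∃ d ∈ S, d ≠ ⊥ ∧ d ≤ b

/-- pi-weight of `B`: least size of a dense subset. -/
noncomputable def piWeight (B : Type u) [BooleanAlgebra B] : Cardinal :=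
  sInf {c | ∃ S : Set B, DenseSub S ∧ #S = c}

/-- `E` is a maximal irredundant subset of `B`. -/
def MaxIrred (E : Set B) : Prop :=
  Irred E ∧ ∀ b : B, b ∉ E → ¬ Irred (insert b E)

/-- least size of a maximal irredundant subset of `B`. -/
noncomputable def irrMM (B : Type u) [BooleanAlgebra B] : Cardinal :=
  sInf {c | ∃ E : Set B, MaxIrred E ∧ #E = c}


/-! Every element `a` of the algebra generated by `insert d S` agrees outside `d` with some
element `y` generated by `S`, i.e. `a \ d = y \ d`. For `a ∈ E` with `a ∈ ⟨E \ {a}, d⟩`, the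
difference `a ∆ y` then lies in `⟨E⟩` below `d`, so it is `⊥` and `a = y ∈ ⟨E \ {a}⟩`. -/

open scoped symmDiff

theorem compl_sdiff_congr {a b d : B} (h : a \ d = b \ d) : aᶜ \ d = bᶜ \ d := by
  rw [_root_.sdiff_eq, _root_.sdiff_eq, ← compl_sup, ← compl_sup, ← sup_sdiff_self_left, h,
    sup_sdiff_self_left]

theorem symmDiff_le_of_sdiff_eq {a b d : B} (h : a \ d = b \ d) : a ∆ b ≤ d := by
  rw [← sdiff_eq_bot_iff, _root_.sdiff_eq, inf_symmDiff_distrib_right, ← _root_.sdiff_eq,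
    ← _root_.sdiff_eq, h, symmDiff_self]

namespace InGen

variable {S T : Set B} {a b : B}

theorem mono (h : S ⊆ T) (ha : InGen S a) : InGen T a := by
  induction ha with
  | base hm => exact base (h hm)
  | bot => exact bot
  | compl _ ih => exact ih.compl
  | sup _ _ iha ihb => exact iha.sup ihb

theorem inf (ha : InGen S a) (hb : InGen S b) : InGen S (a ⊓ b) := by
  simpa only [compl_sup, compl_compl] using (ha.compl.sup hb.compl).compl

theorem symmDiff (ha : InGen S a) (hb : InGen S b) : InGen S (a ∆ b) := by
  rw [symmDiff_eq_sup_sdiff_inf, _root_.sdiff_eq]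
  exact (ha.sup hb).inf (ha.inf hb).compl

theorem exists_sdiff_eq_of_insert {d : B} (ha : InGen (insert d S) a) :
    ∃ y, InGen S y ∧ a \ d = y \ d := by
  induction ha with
  | @base x hx =>
    rcases hx with rfl | hx
    · exact ⟨⊥, bot, by simp⟩
    · exact ⟨x, base hx, rfl⟩
  | bot => exact ⟨⊥, bot, rfl⟩
  | compl _ ih =>
    obtain ⟨y, hy, h⟩ := ih
    exact ⟨yᶜ, hy.compl, compl_sdiff_congr h⟩
  | sup _ _ iha ihb =>
    obtain ⟨y, hy, h⟩ := iha
    obtain ⟨z, hz, h'⟩ := ihb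
    exact ⟨y ⊔ z, hy.sup hz, by rw [sup_sdiff, sup_sdiff, h, h']⟩

end InGen

theorem irred_insert_of_min {B : Type u} [BooleanAlgebra B] (E : Set B) (d : B)
    (hirr : Irred E) (hd : ¬ InGen E d)
    (hmin : ∀ a : B, InGen E a → a ≤ d → a = ⊥) :
    Irred (insert d E) := by
  rintro a (rfl | haE) hgen
  · exact hd (hgen.mono (sdiff_singleton_subset_iff.mpr subset_rfl))
  · have had : d ≠ a := by
      rintro rfl
      exact hd (.base haE)
    rw [← insert_sdiff_singleton_comm had] at hgen
    obtain ⟨y, hy, hay⟩ := hgen.exists_sdiff_eq_of_insert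
    have hya : a = y := symmDiff_eq_bot.mp <|
      hmin _ ((InGen.base haE).symmDiff (hy.mono sdiff_subset)) (symmDiff_le_of_sdiff_eq hay)
    exact hirr a haE (hya ▸ hy)
end

section
/- For every infinite boolean algebra B: π(B) ≤ Irr_mm(B) ≤ |B| ≤ 2^{π(B)}, where π(B) is the pi-weight and Irr_mm(B) is the minimum size of a maximal irredundant subset of B. -/
/-!
A maximal irredundant set `E` generates a dense subalgebra. Otherwise pick `b ≠ ⊥` with no
nonzero generated element below it; then `insert b E` is still irredundant: below `bᶜ` the new
generator `b` is trivial, so if `a ∈ E` were generated by the others, it would agree below `bᶜ`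
with some `y` generated by `E \ {a}`, and `a ∆ y` would be a generated element below `b`, hence
`⊥`. The generated subalgebra has at most `max ℵ₀ #E` elements, and `E` is infinite because a
finite set generates a finite subalgebra. Finally, an element is determined by the members of a
dense set `S` below it, so `#B ≤ 2 ^ #S`.
-/

open Cardinal Set

universe u
variable {B : Type u} [BooleanAlgebra B]

open scoped symmDiff

namespace InGen

variable {E F : Set B} {x y : B}

theorem mono_s3 (hEF : E ⊆ F) (hx : InGen E x) : InGen F x := by
  induction hx with
  | base ha => exact .base (hEF ha)
  | bot => exact .bot
  | compl _ ih => exact .compl ih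
  | sup _ _ ih₁ ih₂ => exact .sup ih₁ ih₂

theorem top : InGen E (⊤ : B) := compl_bot (α := B) ▸ InGen.bot.compl

theorem inf_s3 (hx : InGen E x) (hy : InGen E y) : InGen E (x ⊓ y) := by
  simpa using (hx.compl.sup hy.compl).compl

theorem sdiff (hx : InGen E x) (hy : InGen E y) : InGen E (x \ y) :=
  _root_.sdiff_eq (x := x) ▸ hx.inf_s3 hy.compl

theorem symmDiff_s3 (hx : InGen E x) (hy : InGen E y) : InGen E (x ∆ y) :=
  symmDiff_def x y ▸ (hx.sdiff hy).sup (hy.sdiff hx)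

theorem exists_finite (hx : InGen E x) : ∃ F ⊆ E, F.Finite ∧ InGen F x := by
  induction hx with
  | @base a ha => exact ⟨{a}, singleton_subset_iff.2 ha, finite_singleton a, .base rfl⟩
  | bot => exact ⟨∅, empty_subset E, finite_empty, .bot⟩
  | compl _ ih =>
    obtain ⟨F, hFE, hF, hx⟩ := ih
    exact ⟨F, hFE, hF, hx.compl⟩
  | sup _ _ ih₁ ih₂ =>
    obtain ⟨F, hFE, hF, hx⟩ := ih₁
    obtain ⟨G, hGE, hG, hy⟩ := ih₂
    exact ⟨F ∪ G, union_subset hFE hGE, hF.union hG,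
      .sup (hx.mono_s3 subset_union_left) (hy.mono_s3 subset_union_right)⟩

theorem eq_bot_or_eq_top (hx : InGen (∅ : Set B) x) : x = ⊥ ∨ x = ⊤ := by
  induction hx with
  | base ha => exact absurd ha (notMem_empty _)
  | bot => exact .inl rfl
  | compl _ ih => rcases ih with rfl | rfl <;> simp
  | sup _ _ ih₁ ih₂ => rcases ih₁ with rfl | rfl <;> rcases ih₂ with rfl | rfl <;> simp

theorem exists_inf_eq_of_insert {b c : B} (hc : c ≤ b ∨ c ≤ bᶜ)
    (hx : InGen (insert b E) x) :
    ∃ y, InGen E y ∧ c ⊓ x = c ⊓ y := by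
  induction hx with
  | base ha =>
    rcases ha with rfl | ha
    · rcases hc with hc | hc
      · exact ⟨⊤, top, by rw [inf_top_eq, inf_eq_left.2 hc]⟩
      · refine ⟨⊥, .bot, ?_⟩
        rw [inf_bot_eq, ← disjoint_iff, ← le_compl_iff_disjoint_right]
        exact hc
    · exact ⟨_, .base ha, rfl⟩
  | bot => exact ⟨⊥, .bot, rfl⟩
  | compl _ ih =>
    obtain ⟨y, hy, hxy⟩ := ih
    refine ⟨yᶜ, hy.compl, ?_⟩
    rw [← _root_.sdiff_eq, ← _root_.sdiff_eq, ← sdiff_inf_self_left, hxy, sdiff_inf_self_left]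
  | sup _ _ ih₁ ih₂ =>
    obtain ⟨y₁, hy₁, h₁⟩ := ih₁
    obtain ⟨y₂, hy₂, h₂⟩ := ih₂
    exact ⟨y₁ ⊔ y₂, hy₁.sup hy₂, by rw [inf_sup_left, h₁, h₂, inf_sup_left]⟩

theorem exists_eq_of_insert {b : B} (hx : InGen (insert b E) x) :
    ∃ y z, InGen E y ∧ InGen E z ∧ b ⊓ y ⊔ bᶜ ⊓ z = x := by
  obtain ⟨y, hy, hxy⟩ := hx.exists_inf_eq_of_insert (Or.inl le_rfl)
  obtain ⟨z, hz, hxz⟩ := hx.exists_inf_eq_of_insert (Or.inr le_rfl)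
  refine ⟨y, z, hy, hz, ?_⟩
  rw [← hxy, ← hxz, inf_comm b, inf_comm bᶜ, sup_inf_inf_compl]

end InGen

theorem finite_setOf_inGen {E : Set B} (hE : E.Finite) : {x | InGen E x}.Finite := by
  induction E, hE using Set.Finite.induction_on with
  | empty => exact (toFinite {⊥, ⊤}).subset fun x hx => hx.eq_bot_or_eq_top
  | @insert b E _ _ ih =>
    exact (ih.image2 (fun y z => b ⊓ y ⊔ bᶜ ⊓ z) ih).subset fun x hx =>
      let ⟨y, z, hy, hz, hyz⟩ := hx.exists_eq_of_insert
      ⟨y, hy, z, hz, hyz⟩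

theorem mk_setOf_inGen_le (E : Set B) : #{x | InGen E x} ≤ max ℵ₀ #E := by
  classical
  have hcover :
      {x | InGen E x} ⊆ ⋃ F : Finset E, {x | InGen (Subtype.val '' (F : Set E)) x} := by
    intro x hx
    obtain ⟨F, hFE, hF, hxF⟩ := InGen.exists_finite hx
    refine mem_iUnion.2 ⟨(hF.preimage Subtype.val_injective.injOn).toFinset, ?_⟩
    rwa [Finite.coe_toFinset, Subtype.image_preimage_coe, inter_eq_right.2 hFE]
  have hfinsets : #(Finset E) ≤ max ℵ₀ #E :=
    (mk_le_of_surjective List.toFinset_surjective).trans (mk_list_le_max E)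
  have hfinite : ⨆ F : Finset E, #{x | InGen (Subtype.val '' (F : Set E)) x} ≤ ℵ₀ :=
    ciSup_le' fun F => (finite_setOf_inGen ((F.finite_toSet).image _)).lt_aleph0.le
  calc #{x | InGen E x}
      ≤ #(Finset E) * ⨆ F : Finset E, #{x | InGen (Subtype.val '' (F : Set E)) x} :=
        (mk_le_mk_of_subset hcover).trans (mk_iUnion_le _)
    _ ≤ max ℵ₀ #E * ℵ₀ := mul_le_mul' hfinsets hfinite
    _ = max ℵ₀ #E := mul_aleph0_eq (le_max_left _ _)

theorem DenseSub.le_of_forall_le_imp_le {S : Set B} (hS : DenseSub S) {x y : B}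
    (h : ∀ d ∈ S, d ≤ x → d ≤ y) : x ≤ y := by
  by_contra hxy
  obtain ⟨d, hdS, hd, hdxy⟩ := hS (x \ y) (mt sdiff_eq_bot_iff.1 hxy)
  exact hd (le_bot_iff.1 <|
    (le_inf (h d hdS (hdxy.trans sdiff_le)) hdxy).trans_eq inf_sdiff_self_right)

theorem DenseSub.mk_le_two_pow {S : Set B} (hS : DenseSub S) : #B ≤ 2 ^ #S := by
  have hinj : Function.Injective fun b : B => {d : S | (d : B) ≤ b} := fun x y hxy =>
    le_antisymm (hS.le_of_forall_le_imp_le fun d hd => (Set.ext_iff.1 hxy ⟨d, hd⟩).1)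
      (hS.le_of_forall_le_imp_le fun d hd => (Set.ext_iff.1 hxy ⟨d, hd⟩).2)
  exact (mk_le_of_injective hinj).trans_eq mk_set

theorem MaxIrred.denseSub_setOf_inGen {E : Set B} (hE : MaxIrred E) :
    DenseSub {x | InGen E x} := by
  intro b hb
  by_contra! H
  have hbE : b ∉ E := fun h => H b (.base h) hb le_rfl
  refine hE.2 b hbE fun a ha hgen => ?_
  rcases ha with rfl | haE
  · exact H a (hgen.mono_s3 (sdiff_singleton_subset_iff.2 subset_rfl)) hb le_rfl
  · have hab : a ≠ b := fun h => hbE (h ▸ haE)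
    obtain ⟨y, hy, hay⟩ :=
      (hgen.mono_s3 (insert_sdiff_singleton_comm hab.symm E).ge).exists_inf_eq_of_insert
        (Or.inr le_rfl)
    have hle : a ∆ y ≤ b := disjoint_compl_left_iff.1 <| disjoint_iff.2 <| by
      rw [inf_symmDiff_distrib_left, hay, symmDiff_self]
    have hbot : a ∆ y = ⊥ := by
      by_contra h
      exact H _ ((InGen.base haE).symmDiff_s3 (hy.mono_s3 sdiff_subset)) h hle
    exact hE.1 a haE (symmDiff_eq_bot.1 hbot ▸ hy)

theorem irred_sUnion {c : Set (Set B)} (hc : IsChain (· ⊆ ·) c) (hirr : ∀ E ∈ c, Irred E) :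
    Irred (⋃₀ c) := by
  intro a ha hgen
  have hne : c.Nonempty := let ⟨E, hEc, _⟩ := ha; ⟨E, hEc⟩
  obtain ⟨F, hF, hFfin, haF⟩ := hgen.exists_finite
  obtain ⟨E, hEc, hFE⟩ := hc.directedOn.exists_mem_subset_of_finite_of_subset_sUnion hne
    (hFfin.insert a) (insert_subset ha (hF.trans sdiff_subset))
  exact hirr E hEc a (hFE (mem_insert a F))
    (haF.mono_s3 fun x hx => ⟨hFE (mem_insert_of_mem a hx), (hF hx).2⟩)

theorem exists_maxIrred (B : Type u) [BooleanAlgebra B] : ∃ E : Set B, MaxIrred E := by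
  obtain ⟨E, hE⟩ := zorn_subset {E : Set B | Irred E} fun c hcI hc =>
    ⟨⋃₀ c, irred_sUnion hc hcI, fun _ => subset_sUnion_of_mem⟩
  exact ⟨E, hE.prop, fun b hb hirr =>
    hb (hE.eq_of_subset hirr (subset_insert b E) ▸ mem_insert b E)⟩

theorem DenseSub.piWeight_le_mk {S : Set B} (hS : DenseSub S) : piWeight B ≤ #S :=
  csInf_le' ⟨S, hS, rfl⟩

theorem mk_le_two_pow_piWeight (B : Type u) [BooleanAlgebra B] : #B ≤ 2 ^ piWeight B := by
  obtain ⟨S, hS, hSmin⟩ : ∃ S : Set B, DenseSub S ∧ #S = piWeight B :=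
    csInf_mem (s := {c | ∃ S : Set B, DenseSub S ∧ #S = c})
      ⟨_, univ, fun b hb => ⟨b, mem_univ b, hb, le_rfl⟩, rfl⟩
  exact hSmin ▸ hS.mk_le_two_pow

theorem MaxIrred.irrMM_le_mk {E : Set B} (hE : MaxIrred E) : irrMM B ≤ #E :=
  csInf_le' ⟨E, hE, rfl⟩

theorem irrMM_le_mk (B : Type u) [BooleanAlgebra B] : irrMM B ≤ #B :=
  let ⟨E, hE⟩ := exists_maxIrred B
  hE.irrMM_le_mk.trans (mk_set_le E)

theorem MaxIrred.aleph0_le_mk [Infinite B] {E : Set B} (hE : MaxIrred E) : ℵ₀ ≤ #E := by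
  by_contra! hfin
  have hB : #B < ℵ₀ := hE.denseSub_setOf_inGen.mk_le_two_pow.trans_lt <| power_lt_aleph0
    ofNat_lt_aleph0 (finite_setOf_inGen (lt_aleph0_iff_set_finite.1 hfin)).lt_aleph0
  exact (Cardinal.aleph0_le_mk B).not_gt hB

theorem MaxIrred.piWeight_le_mk [Infinite B] {E : Set B} (hE : MaxIrred E) : piWeight B ≤ #E :=
  calc piWeight B ≤ #{x | InGen E x} := hE.denseSub_setOf_inGen.piWeight_le_mk
    _ ≤ max ℵ₀ #E := mk_setOf_inGen_le E
    _ = #E := max_eq_right hE.aleph0_le_mk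

theorem piWeight_le_irrMM (B : Type u) [BooleanAlgebra B] [Infinite B] : piWeight B ≤ irrMM B :=
  le_csInf (let ⟨E, hE⟩ := exists_maxIrred B; ⟨_, E, hE, rfl⟩) fun _ ⟨_, hE, hcard⟩ =>
    hcard ▸ hE.piWeight_le_mk

theorem piWeight_le_irrMM_le_card_le_two_pow (B : Type u) [BooleanAlgebra B]
    [Infinite B] :
    piWeight B ≤ irrMM B ∧ irrMM B ≤ #B ∧ #B ≤ 2 ^ piWeight B :=
  ⟨piWeight_le_irrMM B, irrMM_le_mk B, mk_le_two_pow_piWeight B⟩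
end

section
/- If E is a chain in a boolean algebra B with |E| ≥ 2 and 0,1 ∉ E, then E is irredundant but not independent. -/
/-! Let `a` lie strictly between `⊥` and `⊤` and be comparable with every element of a chain `S`
not containing it. By induction on the generation, every element generated by `S`
has an interval `[l, u]` with `l < a < u` and `l, u ∈ S ∪ {⊥, ⊤}` whose difference `u \ l` it
either contains or misses; `a` itself cuts every such difference, so `a` is not generated by `S`.
Independence fails at any two distinct `p ≤ q` in `E`, since then `p ⊓ qᶜ = ⊥`. -/

open Cardinal Set

universe u
variable {B : Type u} [BooleanAlgebra B]

def Uncut (d x : B) : Prop := Disjoint x d ∨ d ≤ x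

namespace Uncut

variable {d d' x y : B}

theorem bot : Uncut d (⊥ : B) := Or.inl disjoint_bot_left

theorem compl (h : Uncut d x) : Uncut d xᶜ :=
  h.symm.imp disjoint_compl_left_iff.mpr (·.le_compl_left)

theorem sup (hx : Uncut d x) (hy : Uncut d y) : Uncut d (x ⊔ y) := by
  rcases hx with hx | hx
  · rcases hy with hy | hy
    · exact Or.inl (hx.sup_left hy)
    · exact Or.inr (le_sup_of_le_right hy)
  · exact Or.inr (le_sup_of_le_left hx)

theorem anti (hd : d' ≤ d) (h : Uncut d x) : Uncut d' x :=
  h.imp (·.mono_right hd) hd.trans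

end Uncut

theorem not_uncut_sdiff {l a u : B} (hla : l < a) (hau : a < u) : ¬ Uncut (u \ l) a := by
  rintro (h | h)
  · have : a \ l = ⊥ := by
      rw [← inf_eq_left.mpr hau.le, inf_sdiff_assoc]
      exact h.eq_bot
    exact hla.not_ge (sdiff_eq_bot_iff.mp this)
  · exact hau.not_ge (by simpa [sup_eq_right.mpr hla.le] using sdiff_le_iff.mp h)

theorem exists_uncut_of_inGen {S : Set B} {a x : B} (hS : IsChain (· ≤ ·) (insert a S))
    (ha : a ∉ S) (h0 : a ≠ ⊥) (h1 : a ≠ ⊤) (hx : InGen S x) :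
    ∃ l ∈ {l ∈ insert ⊥ S | l < a}, ∃ u ∈ {u ∈ insert ⊤ S | a < u}, Uncut (u \ l) x := by
  have hS' : IsChain (· ≤ ·) S := hS.mono (subset_insert a S)
  have hL : IsChain (· ≤ ·) {l ∈ insert ⊥ S | l < a} :=
    (hS'.insert fun _ _ _ => Or.inl bot_le).mono (sep_subset _ _)
  have hU : IsChain (· ≥ ·) {u ∈ insert ⊤ S | a < u} :=
    (hS'.insert fun _ _ _ => Or.inr le_top).symm.mono (sep_subset _ _)
  have hbot : ⊥ ∈ {l ∈ insert ⊥ S | l < a} := ⟨mem_insert _ _, bot_lt_iff_ne_bot.mpr h0⟩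
  have htop : ⊤ ∈ {u ∈ insert ⊤ S | a < u} := ⟨mem_insert _ _, lt_top_iff_ne_top.mpr h1⟩
  induction hx with
  | @base s hs =>
    rcases hS.total (mem_insert a S) (mem_insert_of_mem a hs) with h | h
    · exact ⟨⊥, hbot, s, ⟨mem_insert_of_mem _ hs, h.lt_of_ne (ne_of_mem_of_not_mem hs ha).symm⟩,
        Or.inr (by simp)⟩
    · exact ⟨s, ⟨mem_insert_of_mem _ hs, h.lt_of_ne (ne_of_mem_of_not_mem hs ha)⟩, ⊤, htop,
        Or.inl disjoint_sdiff_self_right⟩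
  | bot => exact ⟨⊥, hbot, ⊤, htop, Uncut.bot⟩
  | compl _ ih =>
    obtain ⟨l, hl, u, hu, h⟩ := ih
    exact ⟨l, hl, u, hu, h.compl⟩
  | sup _ _ ihx ihy =>
    obtain ⟨l₁, hl₁, u₁, hu₁, hx⟩ := ihx
    obtain ⟨l₂, hl₂, u₂, hu₂, hy⟩ := ihy
    obtain ⟨l, hl, hl₁l, hl₂l⟩ := hL.directedOn l₁ hl₁ l₂ hl₂
    obtain ⟨u, hu, hu₁u, hu₂u⟩ := hU.directedOn u₁ hu₁ u₂ hu₂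
    exact ⟨l, hl, u, hu, (hx.anti (sdiff_le_sdiff hu₁u hl₁l)).sup
      (hy.anti (sdiff_le_sdiff hu₂u hl₂l))⟩

theorem not_inGen_of_isChain_insert {S : Set B} {a : B} (hS : IsChain (· ≤ ·) (insert a S))
    (ha : a ∉ S) (h0 : a ≠ ⊥) (h1 : a ≠ ⊤) : ¬ InGen S a := fun h => by
  obtain ⟨l, ⟨-, hla⟩, u, ⟨-, hau⟩, hcut⟩ := exists_uncut_of_inGen hS ha h0 h1 h
  exact not_uncut_sdiff hla hau hcut

theorem irred_of_isChain {E : Set B} (hc : IsChain (· ≤ ·) E) (h0 : ⊥ ∉ E) (h1 : ⊤ ∉ E) :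
    Irred E := fun a ha =>
  not_inGen_of_isChain_insert (by rwa [insert_sdiff_singleton, insert_eq_of_mem ha])
    (fun h => h.2 rfl) (ne_of_mem_of_not_mem ha h0) (ne_of_mem_of_not_mem ha h1)

theorem not_indep_of_le {E : Set B} {p q : B} (hp : p ∈ E) (hq : q ∈ E) (hpq : p ≠ q)
    (hle : p ≤ q) : ¬ Indep E := fun h => by
  refine h {p} {q} (by simpa) (by simpa) (Finset.disjoint_singleton.mpr hpq) ?_
  rwa [Finset.inf_singleton, Finset.inf_singleton, id, ← _root_.sdiff_eq, sdiff_eq_bot_iff]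

theorem chain_irred_not_indep {B : Type u} [BooleanAlgebra B] (E : Set B)
    (hc : IsChain (· ≤ ·) E) (h2 : E.Nontrivial) (h0 : ⊥ ∉ E) (h1 : ⊤ ∉ E) :
    Irred E ∧ ¬ Indep E := by
  refine ⟨irred_of_isChain hc h0 h1, ?_⟩
  obtain ⟨p, hp, q, hq, hpq⟩ := h2
  rcases hc hp hq hpq with hle | hle
  · exact not_indep_of_le hp hq hpq hle
  · exact not_indep_of_le hq hp hpq.symm hle
end

section
/- In the boolean algebra P(κ) for an infinite cardinal κ, the family F of all nonempty proper initial segments of κ (i.e., F = {α : 0 < α < κ}, viewing ordinals as sets of smaller ordinals) is a maximal irredundant subset of P(κ). -/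
open Cardinal Set

universe u
variable {B : Type u} [BooleanAlgebra B]

/-!
Below `x`, every set in the algebra generated by the other initial segments agrees with its value
at `x` on a final interval `[z, x)`, which `Iio x` does not; this gives irredundance. For
maximality, if `b` is not an initial segment and not `∅` or `univ`, let `c` be whichever of `b`, `bᶜ`
misses the least element and `x` its least element: then `Iio x = Iio (succ x) ∩ cᶜ`, so `Iio x`
becomes redundant once `b` is added.
-/

open Order

lemma InGen.inf_s7 {E : Set B} {a b : B} (ha : InGen E a)
    (hb : InGen E b) : InGen E (a ⊓ b) := by
  simpa using (ha.compl.sup hb.compl).compl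

def initialSegments (α : Type*) [LinearOrder α] : Set (Set α) :=
  {b | ∃ x : α, b = Iio x ∧ b.Nonempty}

variable {α : Type*} [LinearOrder α]

lemma InGen.exists_forall_Ico_mem_iff {x : α} (hx : (Iio x).Nonempty) {c : Set α}
    (hc : InGen (initialSegments α \ {Iio x}) c) : ∃ z < x, ∀ w ∈ Ico z x, (w ∈ c ↔ x ∈ c) := by
  obtain ⟨z₀, hz₀⟩ := hx
  induction hc with
  | @base c hc =>
    obtain ⟨⟨y, rfl, -⟩, hyx⟩ := hc
    rcases lt_or_gt_of_ne (mt (congrArg Iio) hyx) with hlt | hlt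
    · exact ⟨y, hlt, fun w hw => by simp [hw.1.not_gt, hlt.not_gt]⟩
    · exact ⟨z₀, hz₀, fun w hw => by simp [hlt, hw.2.trans hlt]⟩
  | bot => exact ⟨z₀, hz₀, fun w _ => by simp⟩
  | compl _ ih =>
    obtain ⟨z, hz, hzc⟩ := ih
    exact ⟨z, hz, fun w hw => not_congr (hzc w hw)⟩
  | sup _ _ ihc ihd =>
    obtain ⟨z₁, hz₁, hz₁c⟩ := ihc
    obtain ⟨z₂, hz₂, hz₂d⟩ := ihd
    refine ⟨max z₁ z₂, max_lt hz₁ hz₂, fun w hw => ?_⟩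
    simp only [sup_eq_union, mem_union]
    rw [hz₁c w ⟨le_of_max_le_left hw.1, hw.2⟩, hz₂d w ⟨le_of_max_le_right hw.1, hw.2⟩]

theorem irred_initialSegments : Irred (initialSegments α) := by
  rintro _ ⟨x, rfl, hx⟩ hgen
  obtain ⟨z, hz, hzx⟩ := hgen.exists_forall_Ico_mem_iff hx
  exact lt_irrefl x ((hzx z ⟨le_rfl, hz⟩).1 hz)

lemma Iio_eq_Iio_succ_inter_compl [SuccOrder α] [NoMaxOrder α] {c : Set α} {x : α}
    (hx : IsLeast c x) : Iio x = Iio (succ x) ∩ cᶜ := by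
  rw [Iio_succ]
  ext w
  simp only [mem_Iio, mem_inter_iff, mem_Iic, mem_compl_iff]
  refine ⟨fun hw => ⟨hw.le, fun hwc => (hx.2 hwc).not_gt hw⟩, fun ⟨hw, hwc⟩ => ?_⟩
  exact hw.lt_of_ne fun h => hwc (h ▸ hx.1)

lemma exists_isLeast_of_nonempty [WellFoundedLT α] {s : Set α} (hs : s.Nonempty) :
    ∃ x, IsLeast s x :=
  ⟨wellFounded_lt.min s hs, wellFounded_lt.min_mem s hs, fun _ hy => wellFounded_lt.min_le hy⟩

lemma exists_isLeast_Iio_nonempty [WellFoundedLT α] {b : Set α} (hb : b.Nonempty)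
    (hb' : bᶜ.Nonempty) : ∃ c ∈ ({b, bᶜ} : Set (Set α)), ∃ x, IsLeast c x ∧ (Iio x).Nonempty := by
  obtain ⟨m, -, hm⟩ := exists_isLeast_of_nonempty (hb.mono (subset_univ b))
  have hleast : ∀ c : Set α, c.Nonempty → m ∉ c → ∃ x, IsLeast c x ∧ (Iio x).Nonempty := by
    intro c hc hmc
    obtain ⟨x, hx⟩ := exists_isLeast_of_nonempty hc
    exact ⟨x, hx, m, (hm (mem_univ x)).lt_of_ne (by rintro rfl; exact hmc hx.1)⟩
  by_cases hmb : m ∈ b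
  · exact ⟨bᶜ, by simp, hleast _ hb' (not_not_intro hmb)⟩
  · exact ⟨b, by simp, hleast _ hb hmb⟩

theorem not_irred_insert_initialSegments [SuccOrder α] [WellFoundedLT α] [NoMaxOrder α]
    {b : Set α} (hb : b ∉ initialSegments α) : ¬ Irred (insert b (initialSegments α)) := by
  intro hirr
  rcases b.eq_empty_or_nonempty with rfl | hb₀
  · exact hirr _ (mem_insert _ _) InGen.bot
  rcases bᶜ.eq_empty_or_nonempty with hb₁ | hb₁
  · obtain rfl := compl_empty_iff.1 hb₁
    exact hirr _ (mem_insert _ _) (by simpa using (InGen.bot.compl : InGen _ (⊥ : Set α)ᶜ))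
  obtain ⟨c, hc, x, hx, hIx⟩ := exists_isLeast_Iio_nonempty hb₀ hb₁
  set S := insert b (initialSegments α) \ {Iio x}
  have hbS : b ∈ S := ⟨mem_insert _ _, fun h => hb ((mem_singleton_iff.1 h) ▸ ⟨x, rfl, hIx⟩)⟩
  have hcS : InGen S c := by
    rcases hc with rfl | rfl
    exacts [.base hbS, (InGen.base hbS).compl]
  have hsuccS : Iio (succ x) ∈ S :=
    ⟨mem_insert_of_mem _ ⟨succ x, rfl, x, lt_succ x⟩, (lt_succ x).ne' ∘ Iio_inj.1⟩
  have hxS : InGen S (Iio x) := by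
    rw [Iio_eq_Iio_succ_inter_compl hx]
    exact (InGen.base hsuccS).inf_s7 hcS.compl
  exact hirr (Iio x) (mem_insert_of_mem _ ⟨x, rfl, hIx⟩) hxS

theorem maxIrred_initialSegments [SuccOrder α] [WellFoundedLT α] [NoMaxOrder α] :
    MaxIrred (initialSegments α) :=
  ⟨irred_initialSegments, fun _ => not_irred_insert_initialSegments⟩

theorem initialSegments_maxIrred (κ : Cardinal.{u}) (hκ : Cardinal.aleph0 ≤ κ) :
    MaxIrred {b : Set κ.ord.ToType | ∃ x : κ.ord.ToType, b = Set.Iio x ∧ b.Nonempty} :=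
  have := Cardinal.noMaxOrder hκ
  maxIrred_initialSegments
end

section
/- If D and C are club subsets of ω₁ with D \ C countable, then all but countably many D-blocks are unions of C-blocks. -/
open Cardinal Set

universe u
variable {B : Type u} [BooleanAlgebra B]

/-- A fixed set of size ℵ₁ with its canonical well-order: "ω₁". -/
noncomputable def W : Type := (Cardinal.aleph 1).ord.ToType

noncomputable instance : LinearOrder W := inferInstanceAs (LinearOrder (Cardinal.aleph 1).ord.ToType)

/-- The finite-cofinite algebra on ω₁. -/
def finCofin : Set (Set W) := {b | b.Finite ∨ bᶜ.Finite}

/-- `S` is (the underlying set of) a subalgebra of `P(ω₁)`. -/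
def IsSubalg (S : Set (Set W)) : Prop :=
  ∅ ∈ S ∧ (∀ a ∈ S, aᶜ ∈ S) ∧ ∀ a ∈ S, ∀ b ∈ S, a ∪ b ∈ S

/-- `E` is a maximal irredundant subset of the subalgebra (with carrier) `Bs`. -/
def MaxIrredIn (Bs E : Set (Set W)) : Prop :=
  E ⊆ Bs ∧ Irred E ∧ ∀ b ∈ Bs, b ∉ E → ¬ Irred (insert b E)

/-- `Irr_mm` of a subalgebra of `P(ω₁)` with carrier `Bs`. -/
noncomputable def irrMMIn (Bs : Set (Set W)) : Cardinal :=
  sInf {c | ∃ E, MaxIrredIn Bs E ∧ #E = c}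

/-- pi-weight of a subalgebra of `P(ω₁)` with carrier `Bs`. -/
noncomputable def piIn (Bs : Set (Set W)) : Cardinal :=
  sInf {c | ∃ S, S ⊆ Bs ∧ (∀ b ∈ Bs, b ≠ ∅ → ∃ d ∈ S, d ≠ ∅ ∧ d ⊆ b) ∧ #S = c}

/-- `C` is a closed unbounded subset of ω₁. -/
def IsClubW (C : Set W) : Prop :=
  (∀ α : W, ∃ β ∈ C, α < β) ∧
    ∀ α : W, (C ∩ Set.Iio α).Nonempty → IsLUB (C ∩ Set.Iio α) α → α ∈ C

/-- `α` and `β` lie in the same `C`-block. -/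
def SameBlock (C : Set W) (α β : W) : Prop := ∀ γ ∈ C, (γ ≤ α ↔ γ ≤ β)

/-- `C` is a nice club: all of its blocks are infinite. -/
def NiceClub (C : Set W) : Prop := IsClubW C ∧ ∀ α : W, {β | SameBlock C α β}.Infinite

/-- `b` is a union of `C`-blocks. -/
def BlockUnion (C : Set W) (b : Set W) : Prop :=
  ∀ α β : W, SameBlock C α β → (α ∈ b ↔ β ∈ b)

/-- `b` is blockish for `C`: both `b` and its complement are unions of ℵ₁ many `C`-blocks. -/
def Blockish (C : Set W) (b : Set W) : Prop :=
  BlockUnion C b ∧ ¬ b.Countable ∧ ¬ bᶜ.Countable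

/-- eventual domination: `f α ≤ g α` except on a set of size `< ℵ₁`. -/
def EvDom (f g : W → W) : Prop := {α | ¬ f α ≤ g α}.Countable

/-- the bounding number 𝔟_{ω₁}. -/
noncomputable def bW : Cardinal :=
  sInf {c | ∃ F : Set (W → W), (∀ g, ∃ f ∈ F, ¬ EvDom f g) ∧ #F = c}

/-- the dominating number 𝔡_{ω₁}. -/
noncomputable def dW : Cardinal :=
  sInf {c | ∃ F : Set (W → W), (∀ g, ∃ f ∈ F, EvDom g f) ∧ #F = c}

/-- `T` splits `X`. -/
def Splits (T X : Set W) : Prop := ¬ (X ∩ T).Countable ∧ ¬ (X \ T).Countable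

/-- the reaping number 𝔯_{ω₁}. -/
noncomputable def rW : Cardinal :=
  sInf {c | ∃ R : Set (Set W), (∀ X ∈ R, ¬ X.Countable) ∧
    (∀ T : Set W, ∃ X ∈ R, ¬ Splits T X) ∧ #R = c}

/-- the nice club `C` strongly splits `R`. -/
def StrSplits (C : Set W) (R : Set (Set W)) : Prop :=
  ∀ b : Set W, Blockish C b → ∀ X ∈ R, Splits b X

/-- the strong reaping number r̂_{ω₁}. -/
noncomputable def rHatW : Cardinal :=
  sInf {c | ∃ R : Set (Set W), (∀ X ∈ R, ¬ X.Countable) ∧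
    (∀ C : Set W, NiceClub C → ¬ StrSplits C R) ∧ #R = c}

/-- a subalgebra of `P(ω₁)` is dichotomous iff none of its members is countably infinite. -/
def Dichot (Bs : Set (Set W)) : Prop := ∀ b ∈ Bs, ¬ (b.Countable ∧ b.Infinite)

/-!
Since `cof ω₁ = ℵ₁`, the countable set `D \ C` lies below some `δ ∈ C`, and above `δ` there is some
`ε ∈ D`. Beyond `ε` the clubs agree on everything that matters: if `α ≥ ε` and `β` lies in the
`D`-block of `α`, then so does every `β'` in the `C`-block of `β`, because points of `D ∩ C` are
transferred through both blocks and points of `D \ C` lie below `δ ≤ β'`. Hence only the countably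
many `α < ε` can have `D`-blocks that are not unions of `C`-blocks.
-/

namespace W

theorem cof_eq : Order.cof W = ℵ₁ := by
  change Order.cof (ℵ₁).ord.ToType = ℵ₁
  rw [Ordinal.cof_toType, isRegular_aleph_one.cof_ord]

theorem countable_Iio (α : W) : (Iio α).Countable := by
  -- stated on the underlying `ToType`, which (unlike `W`) carries the `WellFoundedLT` instance
  have : (@Iio (ℵ₁).ord.ToType _ α).Countable := by simpa using mk_Iio_lt (α := (ℵ₁).ord.ToType) α
  exact this

theorem exists_gt_of_countable {s : Set W} (hs : s.Countable) : ∃ δ, ∀ γ ∈ s, γ < δ :=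
  not_isCofinal_iff.1 fun hcof =>
    (lt_aleph_one_iff.2 (le_aleph0_iff_set_countable.2 hs)).not_ge (cof_eq ▸ Order.cof_le hcof)

end W

theorem SameBlock.symm {C : Set W} {α β : W} (h : SameBlock C α β) : SameBlock C β α :=
  fun γ hγ => (h γ hγ).symm

section Refinement

variable {C D : Set W} {δ ε α : W}

theorem SameBlock.of_sameBlock_of_le (hδ : δ ∈ C) (hε : ε ∈ D) (hδε : δ ≤ ε)
    (hDC : D \ C ⊆ Iic δ) (hεα : ε ≤ α) {β β' : W} (hαβ : SameBlock D α β)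
    (hββ' : SameBlock C β β') : SameBlock D α β' := by
  intro γ hγD
  by_cases hγC : γ ∈ C
  · exact (hαβ γ hγD).trans (hββ' γ hγC)
  · have hγδ : γ ≤ δ := hDC ⟨hγD, hγC⟩
    have hδβ' : δ ≤ β' := (hββ' δ hδ).1 (hδε.trans ((hαβ ε hε).1 hεα))
    exact iff_of_true (hγδ.trans (hδε.trans hεα)) (hγδ.trans hδβ')

theorem blockUnion_sameBlock_of_le (hδ : δ ∈ C) (hε : ε ∈ D) (hδε : δ ≤ ε)
    (hDC : D \ C ⊆ Iic δ) (hεα : ε ≤ α) : BlockUnion C {β | SameBlock D α β} :=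
  fun _ _ hββ' =>
    ⟨fun h => h.of_sameBlock_of_le hδ hε hδε hDC hεα hββ',
      fun h => h.of_sameBlock_of_le hδ hε hδε hDC hεα hββ'.symm⟩

end Refinement

theorem blocks_almost_refine (D C : Set W) (hD : IsClubW D) (hC : IsClubW C)
    (h : (D \ C).Countable) :
    {α : W | ¬ BlockUnion C {β | SameBlock D α β}}.Countable := by
  obtain ⟨δ₀, hδ₀⟩ := W.exists_gt_of_countable h
  obtain ⟨δ, hδC, hδ₀δ⟩ := hC.1 δ₀
  obtain ⟨ε, hεD, hδε⟩ := hD.1 δ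
  have hDC : D \ C ⊆ Iic δ := fun γ hγ => ((hδ₀ γ hγ).trans hδ₀δ).le
  refine (W.countable_Iio ε).mono fun α hα => ?_
  by_contra hεα
  exact hα (blockUnion_sameBlock_of_le hδC hεD hδε.le hDC (not_lt.1 hεα))
end

section
/- Assume A ⊂ B ⊂ P(ω₁), B is dichotomous, and for every club C ⊆ ω₁ there exists b ∈ B that is blockish for C. Then Irr_mm(B) ≥ 𝔟_{ω₁}. -/
open Cardinal Set

universe u
variable {B : Type u} [BooleanAlgebra B]

/-!
Let `E` be a maximal irredundant subset of `B`, and let `g` dominate, for every `d` in the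
algebra `⟨E⟩`, the map sending `α` to an element of `d` above `α`: there are at most `|E| + ℵ₀`
such maps. Call `p` and `q` linked if for some `a ∈ E` they lie in a common finite member of
`⟨E \ {a}⟩` and no member of `⟨E \ {a}⟩` separates them; every point has only finitely many
linked partners. On the club `C` of closure points of `g` and of a bound `h` for linked partners,
linked points share a `C`-block, while a `b ∈ B` blockish for `C` meets every uncountable
`d ∈ ⟨E⟩` and its complement uncountably. Hence `b ∉ ⟨E⟩`, and by maximality some `a ∈ E`
equals `(u ∩ b) ∪ (v \ b)` with `u, v ∈ ⟨E \ {a}⟩`. By dichotomy `a ∆ v ⊆ b` and `a ∆ u ⊆ bᶜ`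
are finite, and as `a ∉ ⟨E \ {a}⟩` the finite set `u ∆ v` contains linked points `p ∈ b` and
`q ∉ b`: a contradiction. So `|E| ≥ 𝔟_{ω₁}`, a countable family being always bounded.
-/

open BooleanSubalgebra
open scoped symmDiff

lemma BooleanSubalgebra.symmDiff_mem {L : BooleanSubalgebra B} {a b : B} (ha : a ∈ L) (hb : b ∈ L) :
    a ∆ b ∈ L :=
  sup_mem (sdiff_mem ha hb) (sdiff_mem hb ha)

lemma inGen_iff_mem_closure {E : Set B} {x : B} : InGen E x ↔ x ∈ closure E := by
  refine ⟨fun hx => ?_, fun hx => ?_⟩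
  · induction hx with
    | base ha => exact subset_closure ha
    | bot => exact bot_mem
    | compl _ ih => exact compl_mem ih
    | sup _ _ ih₁ ih₂ => exact sup_mem ih₁ ih₂
  · induction hx using closure_bot_sup_induction with
    | mem x hx => exact .base hx
    | bot => exact .bot
    | sup _ _ _ _ ih₁ ih₂ => exact ih₁.sup ih₂
    | compl _ _ ih => exact ih.compl

lemma irred_iff {E : Set B} : Irred E ↔ ∀ a ∈ E, a ∉ closure (E \ {a}) := by
  simp only [Irred, inGen_iff_mem_closure]

lemma exists_finite_subset_of_mem_closure {E : Set B} {x : B} (hx : x ∈ closure E) :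
    ∃ G ⊆ E, G.Finite ∧ x ∈ closure G := by
  induction hx using closure_bot_sup_induction with
  | mem x hx => exact ⟨{x}, singleton_subset_iff.2 hx, finite_singleton x, subset_closure rfl⟩
  | bot => exact ⟨∅, empty_subset E, finite_empty, bot_mem⟩
  | sup _ _ _ _ ih₁ ih₂ =>
    obtain ⟨G₁, hG₁E, hG₁, hx⟩ := ih₁
    obtain ⟨G₂, hG₂E, hG₂, hy⟩ := ih₂
    exact ⟨G₁ ∪ G₂, union_subset hG₁E hG₂E, hG₁.union hG₂,
      sup_mem (closure_mono subset_union_left hx) (closure_mono subset_union_right hy)⟩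
  | compl _ _ ih =>
    obtain ⟨G, hGE, hG, hx⟩ := ih
    exact ⟨G, hGE, hG, compl_mem hx⟩

lemma isOfFiniteCharacter_irred (S : Set B) :
    Order.IsOfFiniteCharacter {E | E ⊆ S ∧ Irred E} := by
  intro E
  simp only [mem_ofPred_eq, irred_iff]
  constructor
  · rintro ⟨hES, hE⟩ G hGE -
    exact ⟨hGE.trans hES, fun a ha haG =>
      hE a (hGE ha) (closure_mono (sdiff_subset_sdiff_left hGE) haG)⟩
  · intro h
    refine ⟨fun x hx => (h {x} (singleton_subset_iff.2 hx) (finite_singleton x)).1 rfl,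
      fun a ha haE => ?_⟩
    obtain ⟨G, hGE, hG, haG⟩ := exists_finite_subset_of_mem_closure haE
    have hGa : G ⊆ insert a G \ {a} := fun x hx => ⟨mem_insert_of_mem a hx, (hGE hx).2⟩
    exact (h (insert a G) (insert_subset ha (hGE.trans sdiff_subset)) (hG.insert a)).2 a
      (mem_insert a G) (closure_mono hGa haG)

lemma exists_maximal_irred (S : Set B) :
    ∃ E ⊆ S, Irred E ∧ ∀ b ∈ S, b ∉ E → ¬ Irred (insert b E) := by
  obtain ⟨E, -, hE⟩ := (isOfFiniteCharacter_irred S).exists_maximal (x := ∅)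
    ⟨empty_subset S, fun _ h => h.elim⟩
  exact ⟨E, hE.1.1, hE.1.2, fun b hbS hbE hb =>
    hbE (hE.2 ⟨insert_subset hbS hE.1.1, hb⟩ (subset_insert b E) (mem_insert b E))⟩

lemma exists_mem_closure_insert_diff_of_not_irred {E : Set B} {b : B} (hbE : b ∉ closure E)
    (hb : ¬ Irred (insert b E)) : ∃ a ∈ E, a ∈ closure (insert b (E \ {a})) := by
  simp only [irred_iff, not_forall, not_not] at hb
  obtain ⟨a, rfl | ha, hab⟩ := hb
  · exact absurd (closure_mono (fun x hx => (mem_insert_iff.1 hx.1).resolve_left hx.2) hab) hbE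
  · refine ⟨a, ha, closure_mono (fun x hx => ?_) hab⟩
    rcases hx with ⟨rfl | hxE, hxa⟩
    exacts [mem_insert x _, mem_insert_of_mem b ⟨hxE, hxa⟩]

section SetAlgebra

variable {α : Type*}

lemma exists_eq_of_mem_closure_insert {G : Set (Set α)} {b x : Set α}
    (hx : x ∈ closure (insert b G)) : ∃ u ∈ closure G, ∃ v ∈ closure G, x = u ∩ b ∪ v \ b := by
  induction hx using closure_bot_sup_induction with
  | mem a ha =>
    rcases ha with rfl | ha
    · exact ⟨Set.univ, top_mem, ∅, bot_mem, by simp⟩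
    · exact ⟨a, subset_closure ha, a, subset_closure ha, (inter_union_sdiff a b).symm⟩
  | bot => exact ⟨∅, bot_mem, ∅, bot_mem, by simp⟩
  | sup _ _ _ _ ih₁ ih₂ =>
    obtain ⟨u, hu, v, hv, rfl⟩ := ih₁
    obtain ⟨u', hu', v', hv', rfl⟩ := ih₂
    exact ⟨u ∪ u', sup_mem hu hu', v ∪ v', sup_mem hv hv', by ext; simp; tauto⟩
  | compl _ _ ih =>
    obtain ⟨u, hu, v, hv, rfl⟩ := ih
    exact ⟨uᶜ, compl_mem hu, vᶜ, compl_mem hv, by ext; simp; tauto⟩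

lemma finite_closure {G : Set (Set α)} (hG : G.Finite) : (closure G : Set (Set α)).Finite := by
  induction G, hG using Set.Finite.induction_on with
  | empty =>
    refine ((finite_singleton Set.univ).insert ∅).subset fun x hx => ?_
    exact mem_bot.1 (closure_le.2 (empty_subset _) hx)
  | @insert b G _ _ ih =>
    refine (ih.image2 (fun u v => u ∩ b ∪ v \ b) ih).subset fun x hx => ?_
    obtain ⟨u, hu, v, hv, rfl⟩ := exists_eq_of_mem_closure_insert hx
    exact mem_image2_of_mem hu hv

lemma mk_closure_le (E : Set (Set α)) : #(closure E) ≤ max ℵ₀ #E := by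
  classical
  have hcover :
      (closure E : Set (Set α)) ⊆ ⋃ F : Finset E, closure (Subtype.val '' (F : Set E)) := by
    intro x hx
    obtain ⟨G, hGE, hG, hxG⟩ := exists_finite_subset_of_mem_closure hx
    refine mem_iUnion.2 ⟨(hG.preimage Subtype.val_injective.injOn).toFinset, ?_⟩
    rwa [Finite.coe_toFinset, image_preimage_eq_of_subset (by simpa using hGE)]
  calc #(closure E) ≤ #(⋃ F : Finset E, (closure (Subtype.val '' (F : Set E)) : Set (Set α))) :=
        mk_le_mk_of_subset hcover
    _ ≤ #(Finset E) * ⨆ F : Finset E, #(closure (Subtype.val '' (F : Set E))) := mk_iUnion_le _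
    _ ≤ max ℵ₀ #E * ℵ₀ := by
        refine mul_le_mul' ((mk_le_of_surjective List.toFinset_surjective).trans (mk_list_le_max _))
          (ciSup_le' fun F => (finite_closure ((Finset.finite_toSet F).image _)).lt_aleph0.le)
    _ = max ℵ₀ #E := mul_eq_left (le_max_left _ _) (le_max_left _ _) aleph0_ne_zero

lemma exists_inseparable_of_notMem {D : BooleanSubalgebra (Set α)} {s w : Set α} (hw : w ∈ D)
    (hwf : w.Finite) (hsw : s ⊆ w) (hs : s ∉ D) :
    ∃ p ∈ s, ∃ q ∈ w \ s, ∀ t ∈ D, p ∈ t ↔ q ∈ t := by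
  by_contra! hsep
  have hsep' : ∀ p ∈ s, ∀ q ∈ w \ s, ∃ t ∈ D, p ∈ t ∧ q ∉ t := by
    intro p hp q hq
    obtain ⟨t, ht, hpq⟩ := hsep p hp q hq
    rcases hpq with ⟨hpt, hqt⟩ | ⟨hpt, hqt⟩
    exacts [⟨t, ht, hpt, hqt⟩, ⟨tᶜ, compl_mem ht, hpt, not_not.2 hqt⟩]
  choose! t htD hpt hqt using hsep'
  have hs_eq : s = ⋃ p ∈ s, (w ∩ ⋂ q ∈ w \ s, t p q) := by
    ext x
    simp only [mem_iUnion, mem_inter_iff, mem_iInter]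
    refine ⟨fun hx => ⟨x, hx, hsw hx, fun q hq => hpt x hx q hq⟩, fun ⟨p, hp, hxw, hx⟩ => ?_⟩
    by_contra hxs
    exact hqt p hp x ⟨hxw, hxs⟩ (hx x ⟨hxw, hxs⟩)
  refine hs (hs_eq ▸ D.supClosed.biSup_mem (hwf.subset hsw) bot_mem fun p hp => ?_)
  exact inf_mem hw
    (D.infClosed.biInf_mem (hwf.subset sdiff_subset) top_mem fun q hq => htD p hp q hq)

end SetAlgebra

section Linked

variable {α : Type*}

def Linked (E : Set (Set α)) (p q : α) : Prop :=
  ∃ a ∈ E, ∃ w ∈ closure (E \ {a}), w.Finite ∧ p ∈ w ∧ ∀ t ∈ closure (E \ {a}), p ∈ t ↔ q ∈ t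

lemma Linked.symm {E : Set (Set α)} {p q : α} (h : Linked E p q) : Linked E q p := by
  obtain ⟨a, ha, w, hw, hwf, hpw, hpq⟩ := h
  exact ⟨a, ha, w, hw, hwf, (hpq w hw).1 hpw, fun t ht => (hpq t ht).symm⟩

lemma finite_setOf_linked (E : Set (Set α)) (p : α) : {q | Linked E p q}.Finite := by
  set P : Set α → Set α := fun a => {q | ∃ w ∈ closure (E \ {a}), w.Finite ∧ p ∈ w ∧
    ∀ t ∈ closure (E \ {a}), p ∈ t ↔ q ∈ t}
  have hP : ∀ a, (P a).Finite := by
    intro a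
    rcases eq_empty_or_nonempty (P a) with h | ⟨_, w, hw, hwf, hpw, -⟩
    · simp [h]
    · exact hwf.subset fun q ⟨_, _, _, _, hpq⟩ => (hpq w hw).1 hpw
  rcases eq_empty_or_nonempty {q | Linked E p q} with h | ⟨_, a₀, -, w₀, hw₀, hw₀f, hpw₀, -⟩
  · simp [h]
  -- a partner linked through some `a` outside the finite support of `w₀` must lie in `w₀`
  obtain ⟨G, hGE, hG, hw₀G⟩ := exists_finite_subset_of_mem_closure hw₀
  refine (hw₀f.union (hG.biUnion fun a _ => hP a)).subset fun q hq => ?_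
  obtain ⟨a, -, hq⟩ := hq
  by_cases haG : a ∈ G
  · exact Or.inr (mem_biUnion haG hq)
  · obtain ⟨-, -, -, -, hpq⟩ := hq
    have hGa : G ⊆ E \ {a} := fun x hx => ⟨(hGE hx).1, by rintro rfl; exact haG hx⟩
    exact Or.inl ((hpq w₀ (closure_mono hGa hw₀G)).1 hpw₀)

lemma exists_linked_of_not_irred {E : Set (Set α)} {b : Set α} (hE : Irred E)
    (hbE : b ∉ closure E) (hb : ¬ Irred (insert b E))
    (hfin : ∀ s ∈ closure E, s ⊆ b ∨ s ⊆ bᶜ → s.Finite) : ∃ p ∈ b, ∃ q ∉ b, Linked E p q := by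
  obtain ⟨a, haE, ha⟩ := exists_mem_closure_insert_diff_of_not_irred hbE hb
  obtain ⟨u, hu, v, hv, hauv⟩ := exists_eq_of_mem_closure_insert ha
  have hsub : closure (E \ {a}) ≤ closure E := closure_mono sdiff_subset
  have haE' : a ∈ closure E := subset_closure haE
  set w := u ∆ v
  have hw : w ∈ closure (E \ {a}) := symmDiff_mem hu hv
  have hwb : w ∩ b = a ∆ v := by rw [hauv]; ext; simp [w, Set.mem_symmDiff]; tauto
  have hwb' : w \ b = a ∆ u := by rw [hauv]; ext; simp [w, Set.mem_symmDiff]; tauto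
  have hwf : w.Finite := by
    rw [← inter_union_sdiff w b]
    refine (hfin _ ?_ (Or.inl inter_subset_right)).union
      (hfin _ ?_ (Or.inr fun x (hx : x ∈ w \ b) => hx.2))
    · exact hwb ▸ symmDiff_mem haE' (hsub hv)
    · exact hwb' ▸ symmDiff_mem haE' (hsub hu)
  have hwbD : w ∩ b ∉ closure (E \ {a}) := fun h => by
    have hva : v ∆ (w ∩ b) ∈ closure (E \ {a}) := symmDiff_mem hv h
    rw [hwb, symmDiff_comm a v, symmDiff_symmDiff_cancel_left] at hva
    exact irred_iff.1 hE a haE hva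
  obtain ⟨p, hp, q, hq, hpq⟩ := exists_inseparable_of_notMem hw hwf inter_subset_left hwbD
  exact ⟨p, hp.2, q, fun hqb => hq.2 ⟨hq.1, hqb⟩, a, haE, w, hw, hwf, hp.1, hpq⟩

end Linked

noncomputable instance : WellFoundedLT W :=
  inferInstanceAs (WellFoundedLT (Cardinal.aleph 1).ord.ToType)

namespace W

lemma mk_eq_aleph_one : #W = ℵ₁ := mk_ord_toType _

lemma countable_Iic (α : W) : (Iic α).Countable := by
  have hα : #(Iio α) < ℵ₁ :=
    mk_eq_aleph_one ▸ mk_Iio_lt α (by rw [mk_eq_aleph_one]; exact (Ordinal.type_toType _).symm)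
  rw [← Iio_insert]
  exact (le_aleph0_iff_set_countable.1 (lt_aleph_one_iff.1 hα)).insert α

lemma exists_forall_lt_of_countable {s : Set W} (hs : s.Countable) : ∃ β, ∀ x ∈ s, x < β := by
  by_contra! h
  have huniv : (univ : Set W).Countable := (hs.biUnion fun x _ => countable_Iic x).mono
    fun β _ => let ⟨x, hx, hβx⟩ := h β; mem_biUnion hx hβx
  have := le_aleph0_iff_set_countable.2 huniv
  rw [mk_univ, mk_eq_aleph_one] at this
  exact aleph0_lt_aleph_one.not_ge this

lemma exists_mem_gt_of_not_countable {s : Set W} (hs : ¬ s.Countable) (β : W) :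
    ∃ x ∈ s, β < x := by
  by_contra! h
  exact hs ((countable_Iic β).mono h)

lemma exists_isLUB {s : Set W} (hs : BddAbove s) : ∃ σ, IsLUB s σ :=
  (exists_minimal_of_wellFoundedLT _ hs).imp fun _ => minimal_iff_isLeast.1

end W

def closurePts (k : W → W) : Set W := {γ | ∀ β < γ, k β < γ}

lemma closurePts_anti {f k : W → W} (hfk : f ≤ k) : closurePts k ⊆ closurePts f :=
  fun _ hγ β hβ => (hfk β).trans_lt (hγ β hβ)

lemma isClubW_closurePts (k : W → W) : IsClubW (closurePts k) := by
  refine ⟨fun α => ?_, fun α _ hα β hβα => ?_⟩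
  · choose nxt hnxt using fun x : W =>
      W.exists_forall_lt_of_countable (((W.countable_Iic x).image k).insert x)
    set a : ℕ → W := fun n => nxt^[n] α
    have ha : ∀ n, a (n + 1) = nxt (a n) := fun n => Function.iterate_succ_apply' nxt n α
    obtain ⟨m, hm⟩ := W.exists_forall_lt_of_countable (countable_range a)
    obtain ⟨σ, hσ⟩ := W.exists_isLUB ⟨m, fun _ hx => (hm _ hx).le⟩
    refine ⟨σ, fun β hβ => ?_, (hnxt α α (mem_insert α _)).trans_le (hσ.1 ⟨1, ha 0⟩)⟩
    obtain ⟨_, ⟨n, rfl⟩, hβn, -⟩ := hσ.exists_between hβ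
    exact (hnxt (a n) (k β) (mem_insert_of_mem _ ⟨β, hβn.le, rfl⟩)).trans_le (hσ.1 ⟨n + 1, ha n⟩)
  · obtain ⟨γ, ⟨hγ, hγα⟩, hβγ, -⟩ := hα.exists_between hβα
    exact (hγ β hβγ).trans hγα

lemma IsClubW.exists_isGreatest {C : Set W} (hC : IsClubW C) {x : W}
    (hx : (C ∩ Iic x).Nonempty) : ∃ σ, IsGreatest (C ∩ Iic x) σ := by
  obtain ⟨σ, hσ⟩ := W.exists_isLUB (s := C ∩ Iic x) ⟨x, fun _ hy => hy.2⟩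
  have hσx : σ ≤ x := hσ.2 fun _ hy => hy.2
  refine ⟨σ, ⟨?_, hσx⟩, hσ.1⟩
  by_contra hσC
  have heq : C ∩ Iio σ = C ∩ Iic x := by
    ext y
    refine ⟨fun ⟨hyC, hy⟩ => ⟨hyC, hy.le.trans hσx⟩, fun ⟨hyC, hy⟩ => ⟨hyC, ?_⟩⟩
    exact (hσ.1 ⟨hyC, hy⟩).lt_of_ne fun h => hσC (h ▸ hyC)
  exact hσC (hC.2 σ (heq ▸ hx) (heq ▸ hσ))

lemma sameBlock_of_forall_lt {C : Set W} {γ x : W} (hγx : γ ≤ x)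
    (h : ∀ δ ∈ C, γ < δ → x < δ) : SameBlock C γ x :=
  fun δ hδ => ⟨fun hδγ => hδγ.trans hγx, fun hδx => not_lt.1 fun hγδ => (h δ hδ hγδ).not_ge hδx⟩

lemma sameBlock_of_lt_of_lt {C : Set W} {h : W → W} (hC : C ⊆ closurePts h) {p q : W}
    (hpq : q < h p) (hqp : p < h q) : SameBlock C p q := by
  refine fun γ hγ => ⟨fun hγp => not_lt.1 fun hqγ => ?_, fun hγq => not_lt.1 fun hpγ => ?_⟩
  · exact (hqp.trans (hC hγ q hqγ)).not_ge hγp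
  · exact (hpq.trans (hC hγ p hpγ)).not_ge hγq

lemma BlockUnion.compl {C b : Set W} (hb : BlockUnion C b) : BlockUnion C bᶜ :=
  fun α β h => not_congr (hb α β h)

lemma BlockUnion.exists_mem_gt {C b : Set W} (hb : BlockUnion C b) (hC : IsClubW C)
    (hbc : ¬ b.Countable) (β : W) : ∃ γ ∈ C, γ ∈ b ∧ β < γ := by
  obtain ⟨β', hβ'C, hββ'⟩ := hC.1 β
  obtain ⟨x, hxb, hβ'x⟩ := W.exists_mem_gt_of_not_countable hbc β'
  obtain ⟨σ, ⟨hσC, hσx⟩, hσ⟩ := hC.exists_isGreatest ⟨β', hβ'C, hβ'x.le⟩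
  have hsame : SameBlock C σ x :=
    sameBlock_of_forall_lt hσx fun δ hδ hσδ => not_le.1 fun hδx => (hσ ⟨hδ, hδx⟩).not_gt hσδ
  exact ⟨σ, hσC, (hb σ x hsame).2 hxb, hββ'.trans_le (hσ ⟨hβ'C, hβ'x.le⟩)⟩

open Classical in
noncomputable def elemAbove (d : Set W) (α : W) : W :=
  if h : (d ∩ Ioi α).Nonempty then h.some else α

lemma elemAbove_spec {d : Set W} (hd : ¬ d.Countable) (α : W) :
    elemAbove d α ∈ d ∧ α < elemAbove d α := by
  have h : (d ∩ Ioi α).Nonempty := W.exists_mem_gt_of_not_countable hd α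
  rw [elemAbove, dif_pos h]
  exact h.some_mem

lemma BlockUnion.not_countable_inter {C b d : Set W} {g : W → W} (hb : BlockUnion C b)
    (hC : IsClubW C) (hCg : C ⊆ closurePts g) (hbc : ¬ b.Countable) (hd : ¬ d.Countable)
    (hdg : EvDom (elemAbove d) g) : ¬ (d ∩ b).Countable := by
  intro hdb
  obtain ⟨β, hβ⟩ := W.exists_forall_lt_of_countable (hdb.union hdg)
  obtain ⟨γ, hγC, hγb, hβγ⟩ := hb.exists_mem_gt hC hbc β
  obtain ⟨hxd, hγx⟩ := elemAbove_spec hd γ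
  have hxg : elemAbove d γ ≤ g γ := not_not.1 fun h => (hβ γ (Or.inr h)).not_gt hβγ
  have hsame : SameBlock C γ (elemAbove d γ) :=
    sameBlock_of_forall_lt hγx.le fun δ hδ hγδ => hxg.trans_lt (hCg hδ γ hγδ)
  exact (hβ _ (Or.inl ⟨hxd, (hb _ _ hsame).1 hγb⟩)).not_gt (hβγ.trans hγx)

lemma IsSubalg.closure_subset {Bs E : Set (Set W)} (hBs : IsSubalg Bs) (hE : E ⊆ Bs) :
    (closure E : Set (Set W)) ⊆ Bs := fun _ hx => by
  induction hx using closure_bot_sup_induction with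
  | mem x hx => exact hE hx
  | bot => exact hBs.1
  | sup x _ y _ hx hy => exact hBs.2.2 x hx y hy
  | compl x _ hx => exact hBs.2.1 x hx

lemma exists_forall_evDom_of_countable {F : Set (W → W)} (hF : F.Countable) :
    ∃ g, ∀ f ∈ F, EvDom f g := by
  choose g hg using fun α => W.exists_forall_lt_of_countable (hF.image fun f => f α)
  exact ⟨g, fun f hf => countable_empty.mono fun α hα => hα (hg α _ ⟨f, hf, rfl⟩).le⟩

theorem MaxIrredIn.exists_not_evDom_elemAbove {Bs E : Set (Set W)} (hE : MaxIrredIn Bs E)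
    (hBs : IsSubalg Bs) (hdich : Dichot Bs) (hbl : ∀ C : Set W, IsClubW C → ∃ b ∈ Bs, Blockish C b)
    (g : W → W) : ∃ d ∈ closure E, ¬ EvDom (elemAbove d) g := by
  by_contra! hg
  choose h hh using fun p => W.exists_forall_lt_of_countable (finite_setOf_linked E p).countable
  have hC := isClubW_closurePts (g ⊔ h)
  obtain ⟨b, hbBs, hbU, hb, hbc⟩ := hbl _ hC
  have hside : ∀ d ∈ closure E, d ⊆ b ∨ d ⊆ bᶜ → d.Countable := by
    intro d hdE hdb
    by_contra hd
    rcases hdb with hdb | hdb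
    · refine hbU.compl.not_countable_inter hC (closurePts_anti le_sup_left) hbc hd (hg d hdE) ?_
      exact countable_empty.mono fun x hx => hx.2 (hdb hx.1)
    · refine hbU.not_countable_inter hC (closurePts_anti le_sup_left) hb hd (hg d hdE) ?_
      exact countable_empty.mono fun x hx => hdb hx.1 hx.2
  have hbE : b ∉ closure E := fun hbE => hb (hside b hbE (Or.inl subset_rfl))
  have hfin : ∀ s ∈ closure E, s ⊆ b ∨ s ⊆ bᶜ → s.Finite := fun s hs hsb =>
    not_infinite.1 fun hinf => hdich s (hBs.closure_subset hE.1 hs) ⟨hside s hs hsb, hinf⟩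
  obtain ⟨p, hp, q, hq, hpq⟩ := exists_linked_of_not_irred hE.2.1 hbE
    (hE.2.2 b hbBs fun h => hbE (subset_closure h)) hfin
  exact hq ((hbU p q (sameBlock_of_lt_of_lt (closurePts_anti le_sup_right)
    (hh p q hpq) (hh q p hpq.symm))).1 hp)

lemma MaxIrredIn.bW_le_mk {Bs E : Set (Set W)} (hE : MaxIrredIn Bs E) (hBs : IsSubalg Bs)
    (hdich : Dichot Bs) (hbl : ∀ C : Set W, IsClubW C → ∃ b ∈ Bs, Blockish C b) : bW ≤ #E := by
  set F := elemAbove '' (closure E : Set (Set W))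
  have hF : ∀ g, ∃ f ∈ F, ¬ EvDom f g := fun g =>
    let ⟨d, hd, hdg⟩ := hE.exists_not_evDom_elemAbove hBs hdich hbl g
    ⟨_, mem_image_of_mem _ hd, hdg⟩
  have hFc : ℵ₀ < #F := by
    by_contra! hFc
    obtain ⟨g, hg⟩ := exists_forall_evDom_of_countable (le_aleph0_iff_set_countable.1 hFc)
    obtain ⟨f, hf, hfg⟩ := hF g
    exact hfg (hg f hf)
  have hFE : #F ≤ max ℵ₀ #E := mk_image_le.trans (mk_closure_le E)
  calc bW ≤ #F := csInf_le' ⟨F, hF, rfl⟩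
    _ ≤ #E := (le_max_iff.1 hFE).resolve_left hFc.not_ge

theorem irrMM_ge_bW_of_blockish_general (Bs : Set (Set W)) (hsub : IsSubalg Bs)
    (hdich : Dichot Bs)
    (hbl : ∀ C : Set W, IsClubW C → ∃ b ∈ Bs, Blockish C b) :
    bW ≤ irrMMIn Bs := by
  obtain ⟨E, hE⟩ : ∃ E, MaxIrredIn Bs E := exists_maximal_irred Bs
  exact le_csInf ⟨#E, E, hE, rfl⟩ fun _ ⟨E', hE', hc⟩ => hc ▸ hE'.bW_le_mk hsub hdich hbl

theorem irrMM_ge_bW_of_blockish (Bs : Set (Set W)) (hsub : IsSubalg Bs)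
    (hA : finCofin ⊂ Bs) (hproper : Bs ⊂ Set.univ) (hdich : Dichot Bs)
    (hbl : ∀ C : Set W, IsClubW C → ∃ b ∈ Bs, Blockish C b) :
    bW ≤ irrMMIn Bs :=
  irrMM_ge_bW_of_blockish_general Bs hsub hdich hbl
end
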